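/- arXiv:2102.09697 — 2 statements merged into one kernel-verified Lean document; each statement's English description precedes it below -/
import Mathlib

section
/- Let (Ω, σ) be a measure space, 1 < p < ∞, 0 < q < p, and let a : ℤ → [0,∞). Suppose there is a constant C > 0 such that a_j ≤ C·(2^{j(1-p)}·a_{j-1})^{q/p} for all j ∈ ℤ, and suppose M := sup_{j∈ℤ} 2^{j·q(p-1)/(p-q)}·a_j < ∞. Then M ≤ (2^{q(p-1)/(p-q)}·C·2^{q(p-1)/p})^{p/(p-q)}. -/
/-!
Writing `b j = 2 ^ (j α) a j` with `α = q (p - 1) / (p - q)`, the recursion becomes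
`b j ≤ C 2 ^ (α q / p) b (j - 1) ^ (q / p)`, because `α` is chosen so that
`2 ^ (j α) 2 ^ (j (1 - p) q / p) = 2 ^ (j α q / p)`. Taking suprema gives `M ≤ C 2 ^ (α q / p) M ^ (q / p)`, and since `M` is
finite and `q / p < 1` the power `M ^ (q / p)` can be absorbed into the left-hand side.
The stated constant is larger, as `2 ^ (α q / p) ≤ 2 ^ α`.
-/

open ENNReal

namespace ENNReal

theorem le_rpow_inv_one_sub_of_le_mul_rpow {M K : ℝ≥0∞} {θ : ℝ} (hM : M ≠ ⊤) (hθ : θ < 1)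
    (h : M ≤ K * M ^ θ) : M ≤ K ^ (1 - θ)⁻¹ := by
  rcases eq_or_ne M 0 with rfl | hM0
  · exact zero_le
  have hMθ0 : M ^ θ ≠ 0 := (rpow_pos (pos_iff_ne_zero.mpr hM0) hM).ne'
  have hMθtop : M ^ θ ≠ ⊤ := rpow_ne_top_of_ne_zero hM0 hM
  have hpow : M ^ (1 - θ) ≤ K := by
    rw [← ENNReal.mul_le_mul_iff_left hMθ0 hMθtop, ← rpow_add _ _ hM0 hM, sub_add_cancel, rpow_one]
    exact h
  have hθ' : 0 < (1 - θ)⁻¹ := inv_pos.mpr (sub_pos.mpr hθ)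
  calc M = (M ^ (1 - θ)) ^ (1 - θ)⁻¹ := by
        rw [← rpow_mul, mul_inv_cancel₀ (sub_ne_zero.mpr hθ.ne'), rpow_one]
    _ ≤ K ^ (1 - θ)⁻¹ := rpow_le_rpow hpow hθ'.le

end ENNReal

theorem iSup_le_mul_iSup_rpow {ι : Type*} {b : ι → ℝ≥0∞} {K : ℝ≥0∞} {θ : ℝ} (hθ : 0 ≤ θ)
    (σ : ι → ι) (h : ∀ i, b i ≤ K * b (σ i) ^ θ) : ⨆ i, b i ≤ K * (⨆ i, b i) ^ θ :=
  iSup_le fun i => (h i).trans <| by gcongr; exact le_iSup b (σ i)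

theorem rpow_mul_le_of_le_mul_rpow_pred {c C : ℝ≥0∞} (hc0 : c ≠ 0) (hctop : c ≠ ⊤)
    {a : ℤ → ℝ≥0∞} {s γ α : ℝ} (hs : 0 ≤ s) (hα : α * (1 - s) + γ * s = 0)
    (hrec : ∀ j : ℤ, a j ≤ C * (c ^ ((j : ℝ) * γ) * a (j - 1)) ^ s) (j : ℤ) :
    c ^ ((j : ℝ) * α) * a j ≤ C * c ^ (α * s) * (c ^ (((j - 1 : ℤ) : ℝ) * α) * a (j - 1)) ^ s := by
  have hexp : (j : ℝ) * α + (j : ℝ) * γ * s = α * s + ((j - 1 : ℤ) : ℝ) * α * s := by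
    push_cast
    linear_combination (j : ℝ) * hα
  calc c ^ ((j : ℝ) * α) * a j
      ≤ c ^ ((j : ℝ) * α) * (C * (c ^ ((j : ℝ) * γ) * a (j - 1)) ^ s) := by gcongr; exact hrec j
    _ = C * c ^ ((j : ℝ) * α + (j : ℝ) * γ * s) * a (j - 1) ^ s := by
        rw [mul_rpow_of_nonneg _ _ hs, ← rpow_mul, rpow_add _ _ hc0 hctop]
        ring
    _ = C * c ^ (α * s) * (c ^ (((j - 1 : ℤ) : ℝ) * α) * a (j - 1)) ^ s := by
        rw [hexp, mul_rpow_of_nonneg _ _ hs, ← rpow_mul, rpow_add _ _ hc0 hctop]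
        ring

theorem stmt_5_general (p q : ℝ) (hp : 1 < p) (hq : 0 < q) (hqp : q < p)
    (a : ℤ → ℝ≥0∞) (C : ℝ≥0∞)
    (hrec : ∀ j : ℤ, a j ≤ C * ((2 : ℝ≥0∞) ^ ((j : ℝ) * (1 - p)) * a (j - 1)) ^ (q / p))
    (hM : (⨆ j : ℤ, (2 : ℝ≥0∞) ^ ((j : ℝ) * (q * (p - 1) / (p - q))) * a j) < ⊤) :
    (⨆ j : ℤ, (2 : ℝ≥0∞) ^ ((j : ℝ) * (q * (p - 1) / (p - q))) * a j)
      ≤ ((2 : ℝ≥0∞) ^ (q * (p - 1) / (p - q)) * C * (2 : ℝ≥0∞) ^ (q * (p - 1) / p))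
          ^ (p / (p - q)) := by
  set α := q * (p - 1) / (p - q)
  have hp0 : 0 < p := by linarith
  have hpq : 0 < p - q := by linarith
  have hs : 0 ≤ q / p := by positivity
  have hα : α * (1 - q / p) + (1 - p) * (q / p) = 0 := by
    simp only [α]
    field_simp
    ring
  have hstep := rpow_mul_le_of_le_mul_rpow_pred two_ne_zero ofNat_ne_top hs hα hrec
  have hsup := iSup_le_mul_iSup_rpow hs (· - 1) hstep
  have habs := le_rpow_inv_one_sub_of_le_mul_rpow hM.ne
    ((div_lt_one hp0).mpr hqp) hsup
  have hexp : (1 - q / p)⁻¹ = p / (p - q) := by field_simp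
  have hconst : C * 2 ^ (α * (q / p)) ≤ 2 ^ α * C * 2 ^ (q * (p - 1) / p) :=
    calc C * 2 ^ (α * (q / p)) ≤ 2 ^ α * C * 1 := by
          rw [mul_one, mul_comm]
          gcongr
          · exact one_le_two
          · exact mul_le_of_le_one_right (by positivity) ((div_le_one hp0).mpr hqp.le)
      _ ≤ 2 ^ α * C * 2 ^ (q * (p - 1) / p) := by
          gcongr
          exact one_le_rpow one_le_two (div_pos (mul_pos hq (sub_pos.mpr hp)) hp0)
  exact (hexp ▸ habs).trans (rpow_le_rpow hconst (by positivity))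

/-- Dyadic iteration/absorption argument in the proof of Theorem 5.1. -/
theorem stmt_5 (p q : ℝ) (hp : 1 < p) (hq : 0 < q) (hqp : q < p)
    (a : ℤ → ℝ≥0∞) (C : ℝ≥0∞) (hC : 0 < C)
    (hrec : ∀ j : ℤ, a j ≤ C * ((2 : ℝ≥0∞) ^ ((j : ℝ) * (1 - p)) * a (j - 1)) ^ (q / p))
    (hM : (⨆ j : ℤ, (2 : ℝ≥0∞) ^ ((j : ℝ) * (q * (p - 1) / (p - q))) * a j) < ⊤) :
    (⨆ j : ℤ, (2 : ℝ≥0∞) ^ ((j : ℝ) * (q * (p - 1) / (p - q))) * a j)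
      ≤ ((2 : ℝ≥0∞) ^ (q * (p - 1) / (p - q)) * C * (2 : ℝ≥0∞) ^ (q * (p - 1) / p))
          ^ (p / (p - q)) :=
  stmt_5_general p q hp hq hqp a C hrec hM
end

section
/- Let Ω ⊆ ℝⁿ be an open set, let 1 < p < ∞, -1 < t < p-1, 1 ≤ s ≤ p-t, and q ∈ (p(s-1)/(p-1-t), p). Let δ : Ω → (0,∞) be measurable and suppose: (i) the Hardy inequality ∫_Ω |f|^p δ^{t-p} dx ≤ C_H ∫_Ω |∇f|^p δ^{t} dx holds for all f ∈ C_c^∞(Ω), and (ii) ∫_Ω δ^{p(q-s-t)/(p-q)+t} dx =: M < ∞. Then for all f ∈ C_c^∞(Ω), ∫_Ω |f|^q δ^{-s} dx ≤ C_H^{q/p} · M^{(p-q)/p} · (∫_Ω |∇f|^p δ^{t} dx)^{q/p}. -/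
open MeasureTheory ENNReal

/-- Core computation of Proposition 4.2 (prop:trace): Hölder + Hardy gives the trace
inequality with weight δ^t and measure δ^{-s} dx. -/
theorem stmt_11 {n : ℕ} (Ω : Set (Fin n → ℝ)) (hΩ : IsOpen Ω)
    (p t s q CH : ℝ) (hp : 1 < p) (ht1 : -1 < t) (ht2 : t < p - 1)
    (hs1 : 1 ≤ s) (hs2 : s ≤ p - t)
    (hq1 : p * (s - 1) / (p - 1 - t) < q) (hq2 : q < p) (hCH : 0 ≤ CH)
    (δ : (Fin n → ℝ) → ℝ) (hδpos : ∀ x ∈ Ω, 0 < δ x) (hδm : Measurable δ)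
    (hardy : ∀ f : (Fin n → ℝ) → ℝ, ContDiff ℝ (⊤ : ℕ∞) f → HasCompactSupport f →
      tsupport f ⊆ Ω →
      ∫⁻ x in Ω, ENNReal.ofReal (|f x| ^ p * δ x ^ (t - p))
        ≤ ENNReal.ofReal CH * ∫⁻ x in Ω, ENNReal.ofReal (‖fderiv ℝ f x‖ ^ p * δ x ^ t))
    (M : ℝ≥0∞)
    (hM : M = ∫⁻ x in Ω, ENNReal.ofReal (δ x ^ (p * (q - s - t) / (p - q) + t)))
    (hMfin : M < ⊤) :
    ∀ f : (Fin n → ℝ) → ℝ, ContDiff ℝ (⊤ : ℕ∞) f → HasCompactSupport f → tsupport f ⊆ Ω →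
      ∫⁻ x in Ω, ENNReal.ofReal (|f x| ^ q * δ x ^ (-s))
        ≤ ENNReal.ofReal (CH ^ (q / p)) * M ^ ((p - q) / p) *
          (∫⁻ x in Ω, ENNReal.ofReal (‖fderiv ℝ f x‖ ^ p * δ x ^ t)) ^ (q / p) := by
  intro f hf hcs hsupp
  have hp0 : 0 < p := by linarith
  have hq0 : 0 < q := by
    have h1 : 0 ≤ p * (s - 1) / (p - 1 - t) := by
      apply div_nonneg
      · nlinarith
      · linarith
    linarith
  have hpq0 : 0 < p - q := by linarith
  set α : ℝ := p * (q - s - t) / (p - q) + t with hα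
  set β : ℝ := α * ((p - q) / p) with hβ
  have hβα : β * (p / (p - q)) = α := by
    field_simp [hβ]
    rw [hβ, mul_assoc, div_mul_cancel₀ _ hp0.ne', mul_comm]
  -- the two factors for Hölder
  set F : (Fin n → ℝ) → ℝ≥0∞ := fun x => (ENNReal.ofReal (|f x| ^ p * δ x ^ (t - p))) ^ (q / p)
    with hF
  set G : (Fin n → ℝ) → ℝ≥0∞ := fun x => ENNReal.ofReal (δ x ^ β) with hG
  have hqp_nonneg : (0:ℝ) ≤ q / p := by positivity
  -- pointwise identity on Ω
  have key : ∀ x ∈ Ω, ENNReal.ofReal (|f x| ^ q * δ x ^ (-s)) = F x * G x := by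
    intro x hx
    have hδx : 0 < δ x := hδpos x hx
    have hb : (0:ℝ) ≤ |f x| ^ p * δ x ^ (t - p) := by positivity
    simp only [hF, hG]
    rw [ENNReal.ofReal_rpow_of_nonneg hb hqp_nonneg, ← ENNReal.ofReal_mul (by positivity)]
    congr 1
    rw [Real.mul_rpow (by positivity) (le_of_lt (Real.rpow_pos_of_pos hδx _))]
    rw [← Real.rpow_mul (abs_nonneg _), ← Real.rpow_mul hδx.le, mul_assoc,
      ← Real.rpow_add hδx]
    congr 1
    · congr 1
      field_simp
    · congr 1
      field_simp [hβ, hα]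
      rw [hβ, hα]
      field_simp
      ring
  -- measurability
  have hfm : Measurable f := hf.continuous.measurable
  have hFm : Measurable F := by
    apply Measurable.pow_const
    exact (ENNReal.measurable_ofReal.comp ((hfm.abs.pow_const p).mul (hδm.pow_const (t - p))))
  have hGm : Measurable G := ENNReal.measurable_ofReal.comp (hδm.pow_const β)
  -- rewrite LHS
  have hLHS : ∫⁻ x in Ω, ENNReal.ofReal (|f x| ^ q * δ x ^ (-s))
      = ∫⁻ x in Ω, F x * G x := by
    apply setLIntegral_congr_fun hΩ.measurableSet
    exact key
  rw [hLHS]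
  -- Hölder
  have hconj : (p / q).HolderConjugate (p / (p - q)) := by
    rw [Real.holderConjugate_iff]; constructor
    · rw [lt_div_iff₀ hq0]; linarith
    · rw [inv_div, inv_div, ← add_div, add_sub_cancel, div_self hp0.ne']
  have holder := ENNReal.lintegral_mul_le_Lp_mul_Lq ((volume : Measure (Fin n → ℝ)).restrict Ω)
    hconj hFm.aemeasurable hGm.aemeasurable
  simp only [Pi.mul_apply] at holder
  -- identify the two integrals
  have hFp : ∫⁻ x in Ω, F x ^ (p / q) = ∫⁻ x in Ω, ENNReal.ofReal (|f x| ^ p * δ x ^ (t - p)) := by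
    apply lintegral_congr
    intro x
    simp only [hF]
    rw [← ENNReal.rpow_mul]
    rw [div_mul_div_comm, mul_comm q p, div_self (by positivity), ENNReal.rpow_one]
  have hGq : ∫⁻ x in Ω, G x ^ (p / (p - q)) = M := by
    rw [hM]
    apply setLIntegral_congr_fun hΩ.measurableSet
    intro x hx
    simp only [hG]
    rw [ENNReal.ofReal_rpow_of_pos (Real.rpow_pos_of_pos (hδpos x hx) _),
      ← Real.rpow_mul (hδpos x hx).le, hβα]
  rw [hFp, hGq] at holder
  have h1 : (1 : ℝ) / (p / q) = q / p := by field_simp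
  have h2 : (1 : ℝ) / (p / (p - q)) = (p - q) / p := by field_simp
  rw [h1, h2] at holder
  refine holder.trans ?_
  -- apply Hardy
  have hHardy := hardy f hf hcs hsupp
  have hmono := ENNReal.rpow_le_rpow hHardy hqp_nonneg
  rw [ENNReal.mul_rpow_of_nonneg _ _ hqp_nonneg,
    ENNReal.ofReal_rpow_of_nonneg hCH hqp_nonneg] at hmono
  calc (∫⁻ x in Ω, ENNReal.ofReal (|f x| ^ p * δ x ^ (t - p))) ^ (q/p) * M ^ ((p - q) / p)
      ≤ (ENNReal.ofReal (CH ^ (q / p)) *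
          (∫⁻ x in Ω, ENNReal.ofReal (‖fderiv ℝ f x‖ ^ p * δ x ^ t)) ^ (q / p)) *
          M ^ ((p - q) / p) := by
        exact mul_le_mul_left hmono _
    _ = _ := by ring
end
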